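/- Let y₁, y₂ ∈ ℕ, δ, τ > 0, and define q(k₁, k₂) = C(y₁, k₁)·C(y₂, k₂)·Σ_{j=0}^{k₁+k₂} C(k₁+k₂, j)·(−1)^{k₁+k₂−j+1}·τ⁻¹·ln(1 + δτ(y₁ + y₂ − j)) for (k₁, k₂) ∈ ℕ² with (k₁,k₂) ≠ (0,0), k₁ ≤ y₁, k₂ ≤ y₂. Then Σ over all such (k₁, k₂) of q(k₁, k₂) equals τ⁻¹·ln(1 + δτ(y₁ + y₂)). -/

import Mathlib

/-!
With `g j = τ⁻¹ * log (1 + δ τ (y₁ + y₂ - j))`, the inner alternating sum is `-Δ^(k₁+k₂) g 0`,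
the negated forward difference of `g` at `0`. Newton's forward-difference formula, applied once
in each variable, gives `∑ C(y₁,k₁) C(y₂,k₂) Δ^(k₁+k₂) g 0 = g (y₁ + y₂)` over the full rectangle,
and `g (y₁ + y₂) = τ⁻¹ log 1 = 0`. So the sum without the corner `(0,0)` is `g 0`.
-/

open Finset

theorem sum_choose_mul_choose_smul_fwdDiff_iter {G : Type*} [AddCommGroup G]
    (f : ℕ → G) (a b : ℕ) :
    ∑ k ∈ range (a + 1) ×ˢ range (b + 1),
      (a.choose k.1 * b.choose k.2) • (fwdDiff 1)^[k.1 + k.2] f 0 = f (a + b) := by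
  have newton (g : ℕ → G) (n y : ℕ) :
      g (n + y) = ∑ k ∈ range (n + 1), n.choose k • (fwdDiff 1)^[k] g y := by
    simpa [add_comm] using shift_eq_sum_fwdDiff_iter 1 g n y
  rw [newton f, sum_product]
  refine sum_congr rfl fun k₁ _ => ?_
  rw [show (fwdDiff 1)^[k₁] f b = _ from newton _ b 0, smul_sum]
  refine sum_congr rfl fun k₂ _ => ?_
  rw [mul_smul, ← Function.iterate_add_apply, add_comm k₂]

theorem fwdDiff_iter_zero_eq_sum (f : ℕ → ℝ) (n : ℕ) :
    (fwdDiff 1)^[n] f 0 = ∑ j ∈ range (n + 1), (n.choose j : ℝ) * (-1) ^ (n - j) * f j := by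
  rw [fwdDiff_iter_eq_sum_shift]
  refine sum_congr rfl fun j _ => ?_
  simp only [zsmul_eq_mul, zero_add, smul_eq_mul, mul_one]
  push_cast
  ring

theorem sum_erase_choose_mul_choose_mul_alternating_sum (f : ℕ → ℝ) (a b : ℕ) :
    ∑ k ∈ (range (a + 1) ×ˢ range (b + 1)).erase (0, 0),
      (a.choose k.1 : ℝ) * b.choose k.2 *
        ∑ j ∈ range (k.1 + k.2 + 1), ((k.1 + k.2).choose j : ℝ) * (-1) ^ (k.1 + k.2 - j + 1) * f j
      = f 0 - f (a + b) := by
  have hterm (k : ℕ × ℕ) :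
      (a.choose k.1 : ℝ) * b.choose k.2 *
        ∑ j ∈ range (k.1 + k.2 + 1), ((k.1 + k.2).choose j : ℝ) * (-1) ^ (k.1 + k.2 - j + 1) * f j
      = -((a.choose k.1 * b.choose k.2) • (fwdDiff 1)^[k.1 + k.2] f 0) := by
    simp only [fwdDiff_iter_zero_eq_sum, pow_succ, nsmul_eq_mul, mul_sum, ← sum_neg_distrib]
    push_cast
    exact sum_congr rfl fun j _ => by ring
  rw [sum_erase_eq_sub (by simp), sum_congr rfl fun k _ => hterm k, sum_neg_distrib,
    sum_choose_mul_choose_smul_fwdDiff_iter, hterm]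
  simp [neg_add_eq_sub]

theorem stmt_6_general (y₁ y₂ : ℕ) (δ τ : ℝ) :
    ∑ k ∈ (Finset.range (y₁ + 1) ×ˢ Finset.range (y₂ + 1)).erase (0, 0),
      ((y₁.choose k.1 : ℝ) * (y₂.choose k.2 : ℝ) *
        ∑ j ∈ Finset.range (k.1 + k.2 + 1),
          ((k.1 + k.2).choose j : ℝ) * (-1 : ℝ) ^ (k.1 + k.2 - j + 1) *
            τ⁻¹ * Real.log (1 + δ * τ * ((y₁ : ℝ) + (y₂ : ℝ) - j)))
    = τ⁻¹ * Real.log (1 + δ * τ * ((y₁ : ℝ) + y₂)) := by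
  have key := sum_erase_choose_mul_choose_mul_alternating_sum
    (fun j : ℕ => τ⁻¹ * Real.log (1 + δ * τ * ((y₁ : ℝ) + y₂ - j))) y₁ y₂
  simp only [mul_assoc] at key ⊢
  simpa using key

theorem stmt_6 (y₁ y₂ : ℕ) (δ τ : ℝ) (hδ : 0 < δ) (hτ : 0 < τ) :
    ∑ k ∈ (Finset.range (y₁ + 1) ×ˢ Finset.range (y₂ + 1)).erase (0, 0),
      ((y₁.choose k.1 : ℝ) * (y₂.choose k.2 : ℝ) *
        ∑ j ∈ Finset.range (k.1 + k.2 + 1),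
          ((k.1 + k.2).choose j : ℝ) * (-1 : ℝ) ^ (k.1 + k.2 - j + 1) *
            τ⁻¹ * Real.log (1 + δ * τ * ((y₁ : ℝ) + (y₂ : ℝ) - j)))
    = τ⁻¹ * Real.log (1 + δ * τ * ((y₁ : ℝ) + y₂)) :=
  stmt_6_general y₁ y₂ δ τ
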